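/- For ε ∈ (0,1), any two inputs x, x' with |x - x'| ≤ α, and any measurable S ⊆ ℝ, P(x + σN ∈ S) ≤ e^ε·P(x' + σN ∈ S) + Δ, where N ~ N(0,1) and σ² = 2·ln(1.25/Δ)·α²/ε²; that is, the one-dimensional Gaussian mechanism with this variance is (ε,Δ)-differentially private. -/
import Mathlib

open ProbabilityTheory MeasureTheory Real Set
open scoped ENNReal NNReal

lemma gpdf_one (μ x : ℝ) :
    gaussianPDFReal μ 1 x = (Real.sqrt (2*π))⁻¹ * Real.exp (-(x-μ)^2/2) := by
  simp [gaussianPDFReal]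

lemma gauss_map_neg :
    (gaussianReal 0 1).map (fun v : ℝ => -1 * v) = gaussianReal 0 1 := by
  rw [gaussianReal_map_const_mul]
  norm_num

lemma gauss_Iio (m : ℝ) : gaussianReal 0 1 (Iio m) = gaussianReal 0 1 (Ioi (-m)) := by
  conv_lhs => rw [← gauss_map_neg]
  rw [Measure.map_apply (by fun_prop) measurableSet_Iio]
  congr 1
  ext v
  simp only [mem_preimage, mem_Iio, mem_Ioi]
  constructor <;> intro <;> linarith

lemma gauss_singleton (m : ℝ) : gaussianReal 0 1 {m} = 0 := by
  rw [gaussianReal_apply 0 one_ne_zero]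
  exact setLIntegral_measure_zero _ _ (measure_singleton m)

lemma gauss_half : gaussianReal 0 1 (Ioi (0:ℝ)) = 1/2 := by
  have h1 : gaussianReal 0 1 (Iio (0:ℝ)) + gaussianReal 0 1 (Ioi (0:ℝ)) = 1 := by
    rw [← measure_union (by simp [Set.disjoint_left]; intros; linarith) measurableSet_Ioi,
      Iio_union_Ioi, measure_compl (measurableSet_singleton 0) (measure_ne_top _ _),
      gauss_singleton]
    simp
  have h2 : gaussianReal 0 1 (Iio (0:ℝ)) = gaussianReal 0 1 (Ioi (0:ℝ)) := by
    simpa using gauss_Iio 0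
  rw [h2] at h1
  rw [ENNReal.eq_div_iff (by norm_num) (by norm_num), two_mul]
  exact h1

lemma gauss_half' : gaussianReal 0 1 (Ioi (0:ℝ)) = ENNReal.ofReal (1/2) := by
  rw [gauss_half, ENNReal.ofReal_div_of_pos two_pos, ENNReal.ofReal_one, ENNReal.ofReal_ofNat]

lemma gauss_tail_pos {t : ℝ} (ht : 0 ≤ t) :
    gaussianReal 0 1 (Ioi t) ≤ ENNReal.ofReal (Real.exp (-t^2/2) / 2) := by
  have key : ∀ v ∈ Ioi t, gaussianPDF 0 1 v ≤
      ENNReal.ofReal (Real.exp (-t^2/2)) * gaussianPDF t 1 v := by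
    intro v hv
    rw [mem_Ioi] at hv
    rw [gaussianPDF, gaussianPDF, ← ENNReal.ofReal_mul (Real.exp_nonneg _)]
    apply ENNReal.ofReal_le_ofReal
    rw [gpdf_one, gpdf_one, ← mul_assoc, mul_comm (Real.exp (-t^2/2)), mul_assoc]
    apply mul_le_mul_of_nonneg_left _ (by positivity)
    rw [← Real.exp_add, Real.exp_le_exp]
    nlinarith
  have h1 : gaussianReal 0 1 (Ioi t) ≤
      ENNReal.ofReal (Real.exp (-t^2/2)) * gaussianReal t 1 (Ioi t) := by
    rw [gaussianReal_apply 0 one_ne_zero, gaussianReal_apply t one_ne_zero,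
      ← lintegral_const_mul _ (measurable_gaussianPDF t 1)]
    exact setLIntegral_mono ((measurable_gaussianPDF t 1).const_mul _) key
  have h2 : gaussianReal t 1 (Ioi t) = gaussianReal 0 1 (Ioi 0) := by
    have := gaussianReal_map_add_const (μ := 0) (v := 1) t
    rw [zero_add] at this
    rw [← this, Measure.map_apply (by fun_prop) measurableSet_Ioi]
    congr 1
    ext v
    simp only [mem_preimage, mem_Ioi]
    constructor <;> intro <;> linarith
  calc gaussianReal 0 1 (Ioi t) ≤ ENNReal.ofReal (Real.exp (-t^2/2)) * gaussianReal 0 1 (Ioi 0) := by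
        rw [← h2]
        exact h1
    _ = ENNReal.ofReal (Real.exp (-t^2/2) / 2) := by
        rw [gauss_half', ← ENNReal.ofReal_mul (Real.exp_nonneg _)]
        congr 1
        ring

lemma gauss_tail_neg {t : ℝ} (ht : t < 0) :
    gaussianReal 0 1 (Ioi t) ≤ ENNReal.ofReal (1/2 + (-t) * (Real.sqrt (2*π))⁻¹) := by
  have hsplit : Ioi t = Ioc t 0 ∪ Ioi (0:ℝ) := (Ioc_union_Ioi_eq_Ioi ht.le).symm
  rw [hsplit]
  refine (measure_union_le _ _).trans ?_
  have h1 : gaussianReal 0 1 (Ioc t 0) ≤ ENNReal.ofReal ((-t) * (Real.sqrt (2*π))⁻¹) := by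
    rw [gaussianReal_apply 0 one_ne_zero]
    calc ∫⁻ v in Ioc t 0, gaussianPDF 0 1 v
        ≤ ∫⁻ _ in Ioc t 0, ENNReal.ofReal ((Real.sqrt (2*π))⁻¹) := by
          refine setLIntegral_mono (by fun_prop) ?_
          intro v _
          rw [gaussianPDF, gpdf_one]
          apply ENNReal.ofReal_le_ofReal
          calc (Real.sqrt (2*π))⁻¹ * Real.exp (-(v-0)^2/2)
              ≤ (Real.sqrt (2*π))⁻¹ * 1 := by
                apply mul_le_mul_of_nonneg_left _ (by positivity)
                rw [Real.exp_le_one_iff]; nlinarith [sq_nonneg (v-0)]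
            _ = (Real.sqrt (2*π))⁻¹ := mul_one _
      _ = ENNReal.ofReal ((Real.sqrt (2*π))⁻¹) * volume (Ioc t 0) := setLIntegral_const _ _
      _ = ENNReal.ofReal ((-t) * (Real.sqrt (2*π))⁻¹) := by
          rw [Real.volume_Ioc, ← ENNReal.ofReal_mul (by positivity)]
          congr 1
          ring
  calc gaussianReal 0 1 (Ioc t 0) + gaussianReal 0 1 (Ioi 0)
      ≤ ENNReal.ofReal ((-t) * (Real.sqrt (2*π))⁻¹) + ENNReal.ofReal (1/2) := by
        apply add_le_add h1
        rw [gauss_half']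
    _ ≤ ENNReal.ofReal (1/2 + (-t) * (Real.sqrt (2*π))⁻¹) := by
        rw [← ENNReal.ofReal_add (mul_nonneg (by linarith) (by positivity)) (by norm_num : (0:ℝ) ≤ 1/2)]
        apply ENNReal.ofReal_le_ofReal
        linarith

lemma exp_half_le : Real.exp (1/2) ≤ 5/2 := by
  have h : Real.exp (1/2) * Real.exp (1/2) = Real.exp 1 := by
    rw [← Real.exp_add]; norm_num
  nlinarith [Real.exp_one_lt_d9, Real.exp_pos ((1:ℝ)/2)]

lemma num_cs {L c s p : ℝ} (hL5 : 1/5 < L) (hp : 3 < p) (hc : 0 < c) (hs : 0 < s)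
    (hc2 : c^2 = 2*L) (hs2 : s^2 = 2*p) : (8/7 : ℝ) ≤ c * s := by
  have hsq : (8/7:ℝ)^2 ≤ (c*s)^2 := by
    rw [mul_pow, hc2, hs2]
    nlinarith
  nlinarith

lemma num_key {Δ c s t ε : ℝ} (hΔbig : 15/16 ≤ Δ) (hc : 0 < c) (hs : 0 < s)
    (hcs : (8/7:ℝ) ≤ c*s) (hu : (-t)*(2*c) ≤ ε) (hε1 : ε < 1) :
    1/2 + (-t) * s⁻¹ ≤ Δ := by
  have h1 : (1:ℝ) ≤ (Δ - 1/2) * (2*(c*s)) := by nlinarith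
  have h2 : (-t) * (2*c) ≤ ((Δ-1/2)*s) * (2*c) := by nlinarith
  have h3 : -t ≤ (Δ-1/2)*s := le_of_mul_le_mul_right h2 (by positivity)
  have h4 : (-t)/s ≤ Δ-1/2 := (div_le_iff₀ hs).mpr h3
  rw [div_eq_mul_inv] at h4
  linarith

lemma gauss_tail_bound (ε Δ : ℝ) (hε : 0 < ε) (hε1 : ε < 1) (hΔ : 0 < Δ) (hΔ1 : Δ < 1)
    (t : ℝ)
    (ht : Real.sqrt (2 * Real.log (1.25/Δ)) - ε / (2 * Real.sqrt (2 * Real.log (1.25/Δ))) ≤ t) :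
    gaussianReal 0 1 (Ioi t) ≤ ENNReal.ofReal Δ := by
  set L := Real.log (1.25/Δ) with hLdef
  have hL : 0 < L := Real.log_pos (by rw [lt_div_iff₀ hΔ]; linarith)
  set c := Real.sqrt (2*L) with hcdef
  have hc : 0 < c := Real.sqrt_pos.mpr (by linarith)
  have hc2 : c^2 = 2*L := Real.sq_sqrt (by linarith)
  have hexpL : Real.exp (-L) = 4/5 * Δ := by
    rw [Real.exp_neg, Real.exp_log (by positivity), inv_div]
    norm_num
    ring
  rcases le_or_gt 0 (c - ε/(2*c)) with h0 | h0
  · -- t ≥ t0 ≥ 0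
    have ht0 : 0 ≤ t := le_trans h0 ht
    refine (gauss_tail_pos ht0).trans (ENNReal.ofReal_le_ofReal ?_)
    set t0 := c - ε/(2*c) with ht0def
    have hsq : t0^2 ≤ t^2 := by nlinarith
    have hcancel : c * (ε/(2*c)) = ε/2 := by field_simp
    have hexpand : t0^2 = c^2 - ε + (ε/(2*c))^2 := by
      have : t0^2 = c^2 - 2*(c*(ε/(2*c))) + (ε/(2*c))^2 := by ring
      rw [this, hcancel]; ring
    have h2L : 2*L - 1 ≤ t0^2 := by
      rw [hexpand, hc2]; nlinarith [sq_nonneg (ε/(2*c))]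
    have hexp : Real.exp (-t^2/2) ≤ Real.exp (1/2) * (4/5 * Δ) := by
      rw [← hexpL, ← Real.exp_add]
      apply Real.exp_le_exp.mpr
      nlinarith
    nlinarith [mul_nonneg (sub_nonneg.mpr exp_half_le) hΔ.le]
  · -- t0 < 0 : Δ is large
    have h2c : 2*c^2 < ε := by
      have := (sub_neg.mp h0)
      rw [lt_div_iff₀ (by linarith : (0:ℝ) < 2*c)] at this
      nlinarith
    have hL4 : L < 1/4 := by nlinarith
    have hΔbig : (15/16 : ℝ) ≤ Δ := by
      have h1 : (1.25:ℝ)/Δ < Real.exp (1/4) := by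
        rw [← Real.exp_log (show (0:ℝ) < 1.25/Δ by positivity)]
        exact Real.exp_lt_exp.mpr (by linarith)
      rw [div_lt_iff₀ hΔ, show (1.25:ℝ) = 5/4 by norm_num] at h1
      have h2 : (3/4 : ℝ) ≤ Real.exp (-(1/4)) := by
        have := Real.add_one_le_exp (-(1/4) : ℝ)
        linarith
      have h3 : Real.exp (1/4) * Real.exp (-(1/4)) = 1 := by
        rw [← Real.exp_add]; norm_num
      have h4 : Real.exp (1/4) ≤ 4/3 := by nlinarith [Real.exp_pos (-(1:ℝ)/4)]
      nlinarith [mul_nonneg (sub_nonneg.mpr h4) hΔ.le]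
    rcases le_or_gt 0 t with ht2 | ht2
    · refine (gauss_tail_pos ht2).trans (ENNReal.ofReal_le_ofReal ?_)
      have : Real.exp (-t^2/2) ≤ 1 := Real.exp_le_one_iff.mpr (by nlinarith)
      linarith
    · refine (gauss_tail_neg ht2).trans (ENNReal.ofReal_le_ofReal ?_)
      set s := Real.sqrt (2*π) with hsdef
      have hs : 0 < s := Real.sqrt_pos.mpr (by positivity)
      have hs2 : s^2 = 2*π := Real.sq_sqrt (by positivity)
      have hπ : (3:ℝ) < π := Real.pi_gt_three
      have hL5 : (1/5 : ℝ) < L := by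
        have h5 := Real.add_one_le_exp (-L)
        rw [hexpL] at h5
        linarith
      have hcs : (8/7 : ℝ) ≤ c * s := num_cs hL5 hπ hc hs hc2 hs2
      have hu : (-t) * (2*c) ≤ ε := by
        have h1 : -t ≤ ε/(2*c) - c := by linarith
        have h2 : (ε/(2*c) - c) * (2*c) = ε - 2*c^2 := by field_simp
        have h3 := mul_le_mul_of_nonneg_right h1 (by linarith : (0:ℝ) ≤ 2*c)
        rw [h2] at h3
        linarith [sq_nonneg c]
      exact num_key hΔbig hc hs hcs hu hε1

lemma gauss_shift_key (ε Δ : ℝ) (hε : 0 < ε) (hε1 : ε < 1) (hΔ : 0 < Δ) (hΔ1 : Δ < 1)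
    (b : ℝ) (hb : |b| * Real.sqrt (2 * Real.log (1.25/Δ)) ≤ ε)
    (T : Set ℝ) (hT : MeasurableSet T) :
    gaussianReal 0 1 T ≤ ENNReal.ofReal (Real.exp ε) * gaussianReal b 1 T + ENNReal.ofReal Δ := by
  have hone : (1:ℝ≥0∞) ≤ ENNReal.ofReal (Real.exp ε) := by
    rw [← ENNReal.ofReal_one]
    exact ENNReal.ofReal_le_ofReal (Real.one_le_exp hε.le)
  by_cases hb0 : b = 0
  · subst hb0
    calc gaussianReal 0 1 T = 1 * gaussianReal 0 1 T := (one_mul _).symm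
      _ ≤ ENNReal.ofReal (Real.exp ε) * gaussianReal 0 1 T := mul_le_mul_left hone _
      _ ≤ _ := le_self_add
  · set G := {v : ℝ | b^2/2 - b*v ≤ ε} with hGdef
    have hG : MeasurableSet G := by
      have : G = (fun v => b^2/2 - b*v) ⁻¹' Iic ε := rfl
      rw [this]
      exact (measurable_const.sub (measurable_const.mul measurable_id)) measurableSet_Iic
    have hsplit : gaussianReal 0 1 T ≤ gaussianReal 0 1 (T ∩ G) + gaussianReal 0 1 Gᶜ := by
      refine le_trans (measure_mono ?_) (measure_union_le _ _)
      intro v hv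
      by_cases h : v ∈ G
      · exact Or.inl ⟨hv, h⟩
      · exact Or.inr h
    have part1 : gaussianReal 0 1 (T ∩ G) ≤
        ENNReal.ofReal (Real.exp ε) * gaussianReal b 1 T := by
      have key : ∀ v ∈ T ∩ G, gaussianPDF 0 1 v ≤
          ENNReal.ofReal (Real.exp ε) * gaussianPDF b 1 v := by
        rintro v ⟨-, hvG⟩
        have hvG' : b^2/2 - b*v ≤ ε := hvG
        rw [gaussianPDF, gaussianPDF, ← ENNReal.ofReal_mul (Real.exp_nonneg _)]
        apply ENNReal.ofReal_le_ofReal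
        rw [gpdf_one, gpdf_one, ← mul_assoc, mul_comm (Real.exp ε), mul_assoc]
        apply mul_le_mul_of_nonneg_left _ (by positivity)
        rw [← Real.exp_add, Real.exp_le_exp]
        nlinarith
      calc gaussianReal 0 1 (T ∩ G)
          ≤ ENNReal.ofReal (Real.exp ε) * gaussianReal b 1 (T ∩ G) := by
            rw [gaussianReal_apply 0 one_ne_zero, gaussianReal_apply b one_ne_zero,
              ← lintegral_const_mul _ (measurable_gaussianPDF b 1)]
            exact setLIntegral_mono ((measurable_gaussianPDF b 1).const_mul _) key
        _ ≤ ENNReal.ofReal (Real.exp ε) * gaussianReal b 1 T :=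
            mul_le_mul_right (measure_mono Set.inter_subset_left) _
    have part2 : gaussianReal 0 1 Gᶜ ≤ ENNReal.ofReal Δ := by
      set c := Real.sqrt (2 * Real.log (1.25/Δ)) with hcdef
      have hL : 0 < Real.log (1.25/Δ) := Real.log_pos (by rw [lt_div_iff₀ hΔ]; linarith)
      have hc : 0 < c := Real.sqrt_pos.mpr (by linarith)
      have hg : 0 < |b| := abs_pos.mpr hb0
      set t := ε/|b| - |b|/2 with htdef
      have htt0 : c - ε/(2*c) ≤ t := by
        have h1 : c ≤ ε/|b| := (le_div_iff₀ hg).mpr (by linarith [hb, mul_comm c |b|])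
        have h2 : |b| ≤ ε/c := (le_div_iff₀ hc).mpr hb
        have h3 : ε/(2*c) = (ε/c)/2 := by rw [div_div]; ring_nf
        rw [htdef, h3]
        linarith
      rcases lt_or_gt_of_ne hb0 with hbneg | hbpos
      · have habs : |b| = -b := abs_of_neg hbneg
        have hGc : Gᶜ = Ioi t := by
          have ht' : t = (ε - b^2/2)/(-b) := by
            rw [htdef, habs]
            field_simp [hb0]
            ring
          ext v
          simp only [Set.mem_compl_iff, hGdef, Set.mem_setOf_eq, not_le, Set.mem_Ioi, ht',
            div_lt_iff₀ (neg_pos.mpr hbneg)]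
          constructor <;> intro h <;> nlinarith
        rw [hGc]
        exact gauss_tail_bound ε Δ hε hε1 hΔ hΔ1 t htt0
      · have habs : |b| = b := abs_of_pos hbpos
        have hGc : Gᶜ = Iio (-t) := by
          have ht' : -t = (b^2/2 - ε)/b := by
            rw [htdef, habs]
            field_simp [hb0]
            ring
          ext v
          simp only [Set.mem_compl_iff, hGdef, Set.mem_setOf_eq, not_le, Set.mem_Iio, ht',
            lt_div_iff₀ hbpos]
          constructor <;> intro h <;> nlinarith
        rw [hGc, gauss_Iio, neg_neg]
        exact gauss_tail_bound ε Δ hε hε1 hΔ hΔ1 t htt0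
    exact hsplit.trans (add_le_add part1 part2)

theorem stmt_11 {Ω : Type*} [MeasureSpace Ω] [IsProbabilityMeasure (ℙ : Measure Ω)]
    (ε Δ α : ℝ) (hε : 0 < ε) (hε1 : ε < 1) (hΔ : 0 < Δ) (hΔ1 : Δ < 1) (hα : 0 < α)
    (σ : ℝ) (hσ : σ = Real.sqrt (2 * Real.log (1.25 / Δ) * α ^ 2 / ε ^ 2))
    (N : Ω → ℝ) (hN : Measurable N)
    (hlaw : Measure.map N ℙ = gaussianReal 0 1)
    (x x' : ℝ) (hxx' : |x - x'| ≤ α) (S : Set ℝ) (hS : MeasurableSet S) :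
    ℙ {ω | x + σ * N ω ∈ S} ≤
      ENNReal.ofReal (Real.exp ε) * ℙ {ω | x' + σ * N ω ∈ S} + ENNReal.ofReal Δ := by
  have hL : 0 < Real.log (1.25 / Δ) := Real.log_pos (by rw [lt_div_iff₀ hΔ]; linarith)
  set c := Real.sqrt (2 * Real.log (1.25/Δ)) with hcdef
  have hc : 0 < c := Real.sqrt_pos.mpr (by linarith)
  have hσc : σ = c * (α/ε) := by
    rw [hσ, show 2 * Real.log (1.25/Δ) * α^2/ε^2 = (2 * Real.log (1.25/Δ)) * (α/ε)^2 by ring,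
      Real.sqrt_mul (by linarith), Real.sqrt_sq (by positivity)]
  have hσpos : 0 < σ := by rw [hσc]; positivity
  set b := (x' - x)/σ with hbdef
  have hb : |b| * c ≤ ε := by
    have h1 : |x' - x| ≤ α := by rwa [abs_sub_comm]
    have h2 : |b| ≤ α/σ := by
      rw [hbdef, abs_div, abs_of_pos hσpos]
      exact div_le_div_of_nonneg_right h1 hσpos.le
    have h3 : (α/σ) * c = ε := by
      rw [hσc]
      field_simp
    calc |b| * c ≤ (α/σ) * c := mul_le_mul_of_nonneg_right h2 hc.le
      _ = ε := h3
  have hmeas : Measurable fun v : ℝ => x + σ * v := by fun_prop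
  have hmeas' : Measurable fun v : ℝ => x' + σ * v := by fun_prop
  set T := (fun v : ℝ => x + σ * v) ⁻¹' S with hTdef
  have hTmeas : MeasurableSet T := hmeas hS
  have hP1 : ℙ {ω | x + σ * N ω ∈ S} = gaussianReal 0 1 T := by
    rw [show {ω | x + σ * N ω ∈ S} = N ⁻¹' T from rfl, ← Measure.map_apply hN hTmeas, hlaw]
  have hP2 : ℙ {ω | x' + σ * N ω ∈ S} = gaussianReal b 1 T := by
    rw [show {ω | x' + σ * N ω ∈ S} = N ⁻¹' ((fun v : ℝ => x' + σ * v) ⁻¹' S) from rfl,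
      ← Measure.map_apply hN (hmeas' hS), hlaw]
    have hmap := gaussianReal_map_add_const (μ := 0) (v := 1) b
    rw [zero_add] at hmap
    rw [← hmap, Measure.map_apply (f := fun y : ℝ => y + b) (by fun_prop) hTmeas]
    congr 1
    ext v
    have hpt : x + σ * (v + b) = x' + σ * v := by
      rw [hbdef]
      field_simp
      ring
    simp only [Set.mem_preimage, hTdef]
    rw [hpt]
  rw [hP1, hP2]
  exact gauss_shift_key ε Δ hε hε1 hΔ hΔ1 b hb T hTmeas
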